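/- There exists a finite ground set V and a monotone submodular function A : 2^V → ℝ≥0 such that the function f : 2^V → ℝ≥0 defined by f(S) = max_{e ∈ V} A(S ∪ {e}) is not submodular. -/

import Mathlib

/-!
A weighted coverage function is monotone and submodular, but its one-step lookahead need not be.
Let the elements `0, 1, 2, 3` cover the cells `{0}, {1, 2}, {1}, {2}`, where cell `0` weighs `3` and
the others `2`. From `∅` the best single addition is `1`, worth `4`; from `{2}` or `{3}` it is `0`,
worth `5`; from `{2, 3}` it is again `0`, worth `7`. As `7 + 4 > 5 + 5`, the lookahead is not
submodular: element `1` is the best first choice, yet becomes worthless once `2` and `3` are chosen.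
-/

open Finset

/-- A set function is submodular if `f(X) + f(Y) ≥ f(X ∪ Y) + f(X ∩ Y)`. -/
def Submodular {V : Type*} [DecidableEq V] (f : Finset V → ℝ) : Prop :=
  ∀ X Y : Finset V, f (X ∪ Y) + f (X ∩ Y) ≤ f X + f Y

def MonotoneSet {V : Type*} (f : Finset V → ℝ) : Prop :=
  ∀ X Y : Finset V, X ⊆ Y → f X ≤ f Y

section Coverage

variable {ι U M : Type*} [DecidableEq U]

def coverage [AddCommMonoid M] (cover : ι → Finset U) (w : U → M) (S : Finset ι) : M :=
  ∑ u ∈ S.biUnion cover, w u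

variable (cover : ι → Finset U) {w : U → ℝ}

lemma coverage_nonneg (hw : ∀ u, 0 ≤ w u) (S : Finset ι) : 0 ≤ coverage cover w S :=
  sum_nonneg fun u _ => hw u

lemma coverage_mono (hw : ∀ u, 0 ≤ w u) : MonotoneSet (coverage cover w) := fun _ _ hXY =>
  sum_le_sum_of_subset_of_nonneg (biUnion_subset_biUnion_of_subset_left cover hXY)
    fun u _ _ => hw u

lemma coverage_submodular [DecidableEq ι] (hw : ∀ u, 0 ≤ w u) :
    Submodular (coverage cover w) := by
  intro X Y
  have h_inter : coverage cover w (X ∩ Y) ≤ ∑ u ∈ X.biUnion cover ∩ Y.biUnion cover, w u :=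
    sum_le_sum_of_subset_of_nonneg
      (subset_inter (biUnion_subset_biUnion_of_subset_left cover inter_subset_left)
        (biUnion_subset_biUnion_of_subset_left cover inter_subset_right))
      fun u _ _ => hw u
  calc coverage cover w (X ∪ Y) + coverage cover w (X ∩ Y)
      ≤ ∑ u ∈ X.biUnion cover ∪ Y.biUnion cover, w u
          + ∑ u ∈ X.biUnion cover ∩ Y.biUnion cover, w u := by
        rw [coverage, union_biUnion]; gcongr
    _ = coverage cover w X + coverage cover w Y := sum_union_inter

lemma coverage_natCast (w : U → ℕ) :
    coverage cover (fun u => (w u : ℝ)) = fun S => ((coverage cover w S : ℕ) : ℝ) :=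
  funext fun _ => (Nat.cast_sum _ _).symm

end Coverage

section Lookahead

variable {α M : Type*} [Fintype α] [DecidableEq α] (hne : (univ : Finset α).Nonempty)

def lookahead [SemilatticeSup M] (A : Finset α → M) (S : Finset α) : M :=
  univ.sup' hne fun e => A (insert e S)

lemma lookahead_natCast (A : Finset α → ℕ) (S : Finset α) :
    lookahead hne (fun T => (A T : ℝ)) S = lookahead hne A S :=
  (apply_sup'_eq_sup'_comp hne _ Nat.cast_max).symm

end Lookahead

def cells : Fin 4 → Finset (Fin 3)
  | 0 => {0}
  | 1 => {1, 2}
  | 2 => {1}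
  | 3 => {2}

def cellWeight : Fin 3 → ℕ
  | 0 => 3
  | _ => 2

lemma lookahead_cells_violation :
    lookahead univ_nonempty (coverage cells cellWeight) {2} +
        lookahead univ_nonempty (coverage cells cellWeight) {3} <
      lookahead univ_nonempty (coverage cells cellWeight) ({2} ∪ {3}) +
        lookahead univ_nonempty (coverage cells cellWeight) ({2} ∩ {3}) := by
  decide

lemma not_submodular_lookahead_cells :
    ¬Submodular (lookahead univ_nonempty (coverage cells fun u => (cellWeight u : ℝ))) := by
  intro h
  have h23 := h {2} {3}
  simp only [coverage_natCast, lookahead_natCast] at h23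
  exact lookahead_cells_violation.not_ge (by exact_mod_cast h23)

/-- there is a finite ground set and a monotone submodular
function `A` such that the one-step lookahead `f(S) = max_{e} A(S ∪ {e})` is
not submodular. -/
theorem lookahead_not_submodular :
    ∃ (n : ℕ) (hne : (Finset.univ : Finset (Fin n)).Nonempty)
      (A : Finset (Fin n) → ℝ),
      (∀ S, 0 ≤ A S) ∧ MonotoneSet A ∧ Submodular A ∧
      ¬ Submodular (fun S : Finset (Fin n) =>
        Finset.univ.sup' hne fun e => A (insert e S)) := by
  have hw : ∀ u, 0 ≤ (cellWeight u : ℝ) := fun u => Nat.cast_nonneg _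
  exact ⟨4, univ_nonempty, coverage cells fun u => (cellWeight u : ℝ),
    coverage_nonneg cells hw, coverage_mono cells hw, coverage_submodular cells hw,
    not_submodular_lookahead_cells⟩
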